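/- Let D be a finitely generated abelian group and S a D-graded commutative ring that is an integral domain. Let f ∈ S be a nonzero relevant homogeneous element. Then for every nonzero homogeneous h ∈ S there exist a positive integer N, a natural number k, and a nonzero homogeneous element g ∈ S dividing some power of f, such that N·deg(h) + deg(g) = k·deg(f) in D (equivalently, h^N·g/f^k has degree zero). -/

import Mathlib

/-- For a homogeneous element `f` of a `D`-graded ring `S`, the support group `D^f` is the
subgroup of `D` generated by the degrees of all (nonzero) homogeneous elements dividing some
power of `f`. -/
def supportGroup {D S : Type*} [AddCommGroup D] [CommRing S]
    (𝒜 : D → AddSubgroup S) (f : S) : AddSubgroup D :=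
  AddSubgroup.closure {d : D | ∃ g : S, g ≠ 0 ∧ g ∈ 𝒜 d ∧ ∃ k : ℕ, g ∣ f ^ k}

/-!
Since `D^f` has finite index `N`, the element `N • dh` lies in `D^f`. The degrees of nonzero
homogeneous divisors of powers of `f` form a submonoid, so every element of `D^f` is a
difference `a - b` of such degrees. In a domain the cofactor of a homogeneous divisor of `f^k`
is again homogeneous, so `k • df - a` is also such a degree, and `b + (k • df - a)` is the degree
of the required `g`.
-/

theorem AddSubmonoid.exists_sub_eq_of_mem_closure {D : Type*} [AddCommGroup D]
    (M : AddSubmonoid D) {x : D} (hx : x ∈ AddSubgroup.closure (M : Set D)) :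
    ∃ a ∈ M, ∃ b ∈ M, a - b = x := by
  induction hx using AddSubgroup.closure_induction with
  | mem x hx => exact ⟨x, hx, 0, M.zero_mem, sub_zero x⟩
  | zero => exact ⟨0, M.zero_mem, 0, M.zero_mem, sub_zero 0⟩
  | add x y _ _ hx hy =>
    obtain ⟨a, ha, b, hb, rfl⟩ := hx
    obtain ⟨a', ha', b', hb', rfl⟩ := hy
    exact ⟨a + a', M.add_mem ha ha', b + b', M.add_mem hb hb', by abel⟩
  | neg x _ hx =>
    obtain ⟨a, ha, b, hb, rfl⟩ := hx
    exact ⟨b, hb, a, ha, (neg_sub a b).symm⟩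

namespace DirectSum

variable {ι A σ : Type*} [DecidableEq ι]

theorem mem_of_decompose_eq_zero_of_ne [AddCommMonoid A] [SetLike σ A] [AddSubmonoidClass σ A]
    (ℳ : ι → σ) [Decomposition ℳ] {x : A} {i : ι} (h : ∀ j ≠ i, (decompose ℳ x j : A) = 0) : x ∈ ℳ i := by
  have hx : decompose ℳ x = of (fun j ↦ ℳ j) i (decompose ℳ x i) := by
    ext j
    obtain rfl | hj := eq_or_ne j i
    · rw [of_eq_same]
    · rw [of_eq_of_ne _ _ _ hj, h j hj, ZeroMemClass.coe_zero]
  rw [← (decompose ℳ).symm_apply_apply x, hx, decompose_symm_of]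
  exact SetLike.coe_mem _

theorem mem_of_mul_mem_of_left_mem [AddLeftCancelMonoid ι] [Semiring A] [NoZeroDivisors A]
    [SetLike σ A] [AddSubmonoidClass σ A] (𝒜 : ι → σ) [GradedRing 𝒜] {a b : A} {i j : ι}
    (ha : a ∈ 𝒜 i) (ha0 : a ≠ 0) (hab : a * b ∈ 𝒜 (i + j)) : b ∈ 𝒜 j := by
  refine mem_of_decompose_eq_zero_of_ne 𝒜 fun n hn ↦ ?_
  have hprod : a * (decompose 𝒜 b n : A) = 0 := by
    rw [← coe_decompose_mul_add_of_left_mem 𝒜 ha,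
      decompose_of_mem_ne 𝒜 hab fun h ↦ hn (add_left_cancel h).symm]
  exact (mul_eq_zero.mp hprod).resolve_left ha0

end DirectSum

section DivisorDegrees

variable {D S σ : Type*} [CommSemiring S] [SetLike σ S] [AddSubmonoidClass σ S]

def divisorDegrees [AddMonoid D] [NoZeroDivisors S] [Nontrivial S] (𝒜 : D → σ)
    [SetLike.GradedMonoid 𝒜] (f : S) : AddSubmonoid D where
  carrier := {d : D | ∃ g : S, g ≠ 0 ∧ g ∈ 𝒜 d ∧ ∃ k : ℕ, g ∣ f ^ k}
  zero_mem' := ⟨1, one_ne_zero, SetLike.GradedOne.one_mem, 0, one_dvd _⟩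
  add_mem' := by
    rintro a b ⟨g, hg0, hg, k, hgk⟩ ⟨g', hg'0, hg', k', hg'k'⟩
    exact ⟨g * g', mul_ne_zero hg0 hg'0, SetLike.GradedMul.mul_mem hg hg', k + k',
      pow_add f k k' ▸ mul_dvd_mul hgk hg'k'⟩

theorem nsmul_sub_mem_divisorDegrees [AddCommGroup D] [DecidableEq D] [IsDomain S]
    (𝒜 : D → σ) [GradedRing 𝒜] {f : S} {df : D} (hf : f ∈ 𝒜 df) (hf0 : f ≠ 0) {d : D}
    (hd : d ∈ divisorDegrees 𝒜 f) : ∃ k : ℕ, k • df - d ∈ divisorDegrees 𝒜 f := by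
  obtain ⟨g, hg0, hg, k, g', hfk⟩ := hd
  have hg'0 : g' ≠ 0 := by
    rintro rfl
    exact pow_ne_zero k hf0 (by rw [hfk, mul_zero])
  have hgg' : g * g' ∈ 𝒜 (d + (k • df - d)) := by
    rw [add_sub_cancel, ← hfk]
    exact SetLike.pow_mem_graded k hf
  exact ⟨k, g', hg'0, DirectSum.mem_of_mul_mem_of_left_mem 𝒜 hg hg0 hgg', k,
    Dvd.intro_left g hfk.symm⟩

theorem exists_add_mem_divisorDegrees_eq_nsmul [AddCommGroup D] [DecidableEq D] [IsDomain S]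
    (𝒜 : D → σ) [GradedRing 𝒜] {f : S} {df : D} (hf : f ∈ 𝒜 df) (hf0 : f ≠ 0) {x : D}
    (hx : x ∈ AddSubgroup.closure (divisorDegrees 𝒜 f : Set D)) :
    ∃ d ∈ divisorDegrees 𝒜 f, ∃ k : ℕ, x + d = k • df := by
  obtain ⟨a, ha, b, hb, rfl⟩ := (divisorDegrees 𝒜 f).exists_sub_eq_of_mem_closure hx
  obtain ⟨k, hk⟩ := nsmul_sub_mem_divisorDegrees 𝒜 hf hf0 ha
  exact ⟨b + (k • df - a), add_mem hb hk, k, by abel⟩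

end DivisorDegrees

theorem stmt_5 {D S : Type*} [AddCommGroup D] [DecidableEq D]
    [CommRing S] [IsDomain S]
    (𝒜 : D → AddSubgroup S) [GradedRing 𝒜] (f : S) (df : D) (hf : f ∈ 𝒜 df) (hf0 : f ≠ 0)
    (hrel : (supportGroup 𝒜 f).FiniteIndex)
    (dh : D) :
    ∃ (N : ℕ) (k : ℕ) (g : S) (dg : D), 0 < N ∧ g ≠ 0 ∧ g ∈ 𝒜 dg ∧
      (∃ m : ℕ, g ∣ f ^ m) ∧ N • dh + dg = k • df := by
  have hN : (supportGroup 𝒜 f).index • dh ∈ supportGroup 𝒜 f := AddSubgroup.nsmul_index_mem _ dh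
  obtain ⟨dg, ⟨g, hg0, hg, hgf⟩, k, hk⟩ := exists_add_mem_divisorDegrees_eq_nsmul 𝒜 hf hf0 hN
  exact ⟨_, k, g, dg, Nat.pos_of_ne_zero hrel.index_ne_zero, hg0, hg, hgf, hk⟩
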